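/- Let u × v denote the 7-dimensional cross product on ℝ⁷, defined coordinatewise by (u × v)_k = φ(u, v, e_k) for the standard basis vectors e_k. Then: (i) for all u, v ∈ ℝ⁷, ‖u × v‖² = ‖u‖²·‖v‖² − ⟪u,v⟫², so in particular ‖u × v‖ = 1 when u, v are orthonormal; and (ii) for orthonormal vectors u, v, w in ℝ⁷, φ(u, v, w) = 1 if and only if w = u × v. -/
import Mathlib

noncomputable section

open scoped RealInnerProductSpace

/-- The alternating 3-form `dx_{ijk}` on `ℝ⁷` (with 0-indexed coordinates). -/
def dx3 (i j k : Fin 7) (u v w : EuclideanSpace ℝ (Fin 7)) : ℝ :=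
  Matrix.det !![u i, v i, w i; u j, v j, w j; u k, v k, w k]

/-- The standard G₂ 3-form on `ℝ⁷`. -/
def g2Form (u v w : EuclideanSpace ℝ (Fin 7)) : ℝ :=
  dx3 0 1 2 u v w + dx3 0 3 4 u v w + dx3 0 5 6 u v w + dx3 1 3 5 u v w
    - dx3 1 4 6 u v w - dx3 2 3 6 u v w - dx3 2 4 5 u v w

/-- The 7-dimensional cross product, defined coordinatewise by
`(u × v)_k = φ(u, v, e_k)` for the standard basis vectors `e_k`. -/
def crossG2 (u v : EuclideanSpace ℝ (Fin 7)) : EuclideanSpace ℝ (Fin 7) :=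
  (WithLp.equiv 2 (Fin 7 → ℝ)).symm fun k => g2Form u v (EuclideanSpace.single k 1)

lemma crossG2_apply (u v : EuclideanSpace ℝ (Fin 7)) (k : Fin 7) :
    crossG2 u v k = g2Form u v (EuclideanSpace.single k 1) := rfl

lemma g2_expand (u v w : EuclideanSpace ℝ (Fin 7)) :
    g2Form u v w =
      (u 0 * v 1 - u 1 * v 0) * w 2 + (u 2 * v 0 - u 0 * v 2) * w 1 + (u 1 * v 2 - u 2 * v 1) * w 0
      + (u 0 * v 3 - u 3 * v 0) * w 4 + (u 4 * v 0 - u 0 * v 4) * w 3 + (u 3 * v 4 - u 4 * v 3) * w 0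
      + (u 0 * v 5 - u 5 * v 0) * w 6 + (u 6 * v 0 - u 0 * v 6) * w 5 + (u 5 * v 6 - u 6 * v 5) * w 0
      + (u 1 * v 3 - u 3 * v 1) * w 5 + (u 5 * v 1 - u 1 * v 5) * w 3 + (u 3 * v 5 - u 5 * v 3) * w 1
      - ((u 1 * v 4 - u 4 * v 1) * w 6 + (u 6 * v 1 - u 1 * v 6) * w 4 + (u 4 * v 6 - u 6 * v 4) * w 1)
      - ((u 2 * v 3 - u 3 * v 2) * w 6 + (u 6 * v 2 - u 2 * v 6) * w 3 + (u 3 * v 6 - u 6 * v 3) * w 2)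
      - ((u 2 * v 4 - u 4 * v 2) * w 5 + (u 5 * v 2 - u 2 * v 5) * w 4 + (u 4 * v 5 - u 5 * v 4) * w 2) := by
  simp [g2Form, dx3, Matrix.det_fin_three]; ring


lemma crossC0 (u v : EuclideanSpace ℝ (Fin 7)) : crossG2 u v 0 = u 1 * v 2 - u 2 * v 1 + (u 3 * v 4 - u 4 * v 3) + (u 5 * v 6 - u 6 * v 5) := by
  rw [crossG2_apply, g2_expand]
  simp (config := { decide := true }) [EuclideanSpace.single_apply]

lemma crossC1 (u v : EuclideanSpace ℝ (Fin 7)) : crossG2 u v 1 = u 2 * v 0 - u 0 * v 2 + (u 3 * v 5 - u 5 * v 3) - (u 4 * v 6 - u 6 * v 4) := by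
  rw [crossG2_apply, g2_expand]
  simp (config := { decide := true }) [EuclideanSpace.single_apply]

lemma crossC2 (u v : EuclideanSpace ℝ (Fin 7)) : crossG2 u v 2 = u 0 * v 1 - u 1 * v 0 - (u 3 * v 6 - u 6 * v 3) - (u 4 * v 5 - u 5 * v 4) := by
  rw [crossG2_apply, g2_expand]
  simp (config := { decide := true }) [EuclideanSpace.single_apply]

lemma crossC3 (u v : EuclideanSpace ℝ (Fin 7)) : crossG2 u v 3 = u 4 * v 0 - u 0 * v 4 + (u 5 * v 1 - u 1 * v 5) - (u 6 * v 2 - u 2 * v 6) := by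
  rw [crossG2_apply, g2_expand]
  simp (config := { decide := true }) [EuclideanSpace.single_apply]

lemma crossC4 (u v : EuclideanSpace ℝ (Fin 7)) : crossG2 u v 4 = u 0 * v 3 - u 3 * v 0 - (u 6 * v 1 - u 1 * v 6) - (u 5 * v 2 - u 2 * v 5) := by
  rw [crossG2_apply, g2_expand]
  simp (config := { decide := true }) [EuclideanSpace.single_apply]

lemma crossC5 (u v : EuclideanSpace ℝ (Fin 7)) : crossG2 u v 5 = u 6 * v 0 - u 0 * v 6 + (u 1 * v 3 - u 3 * v 1) - (u 2 * v 4 - u 4 * v 2) := by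
  rw [crossG2_apply, g2_expand]
  simp (config := { decide := true }) [EuclideanSpace.single_apply]

lemma crossC6 (u v : EuclideanSpace ℝ (Fin 7)) : crossG2 u v 6 = u 0 * v 5 - u 5 * v 0 - (u 1 * v 4 - u 4 * v 1) - (u 2 * v 3 - u 3 * v 2) := by
  rw [crossG2_apply, g2_expand]
  simp (config := { decide := true }) [EuclideanSpace.single_apply]

lemma inner_crossG2 (u v w : EuclideanSpace ℝ (Fin 7)) :
    ⟪crossG2 u v, w⟫ = g2Form u v w := by
  simp only [PiLp.inner_apply, RCLike.inner_apply, conj_trivial, Fin.sum_univ_seven,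
    crossC0, crossC1, crossC2, crossC3, crossC4, crossC5, crossC6, g2_expand]
  ring

lemma normsq_crossG2 (u v : EuclideanSpace ℝ (Fin 7)) :
    ‖crossG2 u v‖ ^ 2 = ‖u‖ ^ 2 * ‖v‖ ^ 2 - ⟪u, v⟫ ^ 2 := by
  have h : ⟪crossG2 u v, crossG2 u v⟫ = ⟪u, u⟫ * ⟪v, v⟫ - ⟪u, v⟫ ^ 2 := by
    simp only [PiLp.inner_apply, RCLike.inner_apply, conj_trivial, Fin.sum_univ_seven,
      crossC0, crossC1, crossC2, crossC3, crossC4, crossC5, crossC6]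
    ring
  rw [real_inner_self_eq_norm_sq, real_inner_self_eq_norm_sq, real_inner_self_eq_norm_sq] at h
  exact h

/-- Properties of the 7-dimensional cross product: `‖u × v‖² = ‖u‖²‖v‖² − ⟪u,v⟫²`
(so `‖u × v‖ = 1` for orthonormal `u, v`), and for orthonormal `u, v, w` one has
`φ(u,v,w) = 1` iff `w = u × v`. -/
theorem crossG2_properties :
    (∀ u v : EuclideanSpace ℝ (Fin 7),
      ‖crossG2 u v‖ ^ 2 = ‖u‖ ^ 2 * ‖v‖ ^ 2 - ⟪u, v⟫ ^ 2) ∧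
    (∀ u v : EuclideanSpace ℝ (Fin 7), Orthonormal ℝ ![u, v] → ‖crossG2 u v‖ = 1) ∧
    (∀ u v w : EuclideanSpace ℝ (Fin 7), Orthonormal ℝ ![u, v, w] →
      (g2Form u v w = 1 ↔ w = crossG2 u v)) := by
  have key : ∀ u v : EuclideanSpace ℝ (Fin 7), ‖u‖ = 1 → ‖v‖ = 1 → ⟪u, v⟫ = 0 →
      ‖crossG2 u v‖ = 1 := by
    intro u v hu hv huv
    have h := normsq_crossG2 u v
    rw [hu, hv, huv] at h
    nlinarith [norm_nonneg (crossG2 u v)]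
  refine ⟨normsq_crossG2, ?_, ?_⟩
  · intro u v h
    have hu := h.1 0
    have hv := h.1 1
    have huv := h.2 (show (0 : Fin 2) ≠ 1 by decide)
    simp only [Matrix.cons_val_zero, Matrix.cons_val_one, Matrix.head_cons] at hu hv huv
    exact key u v hu hv huv
  · intro u v w h
    have hu := h.1 0
    have hv := h.1 1
    have hw := h.1 2
    have huv := h.2 (show (0 : Fin 3) ≠ 1 by decide)
    simp only [Matrix.cons_val_zero, Matrix.cons_val_one, Matrix.head_cons,
      Matrix.cons_val_two, Matrix.tail_cons] at hu hv hw huv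
    have hx : ‖crossG2 u v‖ = 1 := key u v hu hv huv
    rw [← inner_crossG2]
    rw [inner_eq_one_iff_of_norm_eq_one hx hw]
    exact eq_comm

end
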